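/- Let k ≥ 4 and n ≥ 3 with n-2 = r(k-3) + t and 0 ≤ t ≤ k-4. The graph X_{n,k}, whose vertex set is partitioned into an edge A = {u,v}, a set B that is a disjoint union of r cliques of size k-3, and a clique C of size t, with all edges present between A and B ∪ C, is 2-connected (for n ≥ 3), and no cycle of X_{n,k} containing the edge uv has length k or more. -/

import Mathlib

/-- A graph is 2-connected if it has at least 3 vertices and remains connected
after deleting any single vertex. -/
def TwoConnected {V : Type*} (G : SimpleGraph V) : Prop :=
  3 ≤ Nat.card V ∧ ∀ v : V, (G.induce {w : V | w ≠ v}).Connected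

/-- The graph `X_{n,k}` (with `n = 2 + r*(k-3) + t`): an edge `A = {u,v}`
(the two vertices of `Fin 2`), a union `B` of `r` disjoint cliques of size
`k-3` (the pairs in `Fin r × Fin (k-3)`), a clique `C` of size `t`, and all
edges between `A` and `B ∪ C`. -/
def Xgraph (r m t : ℕ) : SimpleGraph (Fin 2 ⊕ (Fin r × Fin m) ⊕ Fin t) :=
  SimpleGraph.fromRel fun a b =>
    match a, b with
    | Sum.inl _, _ => True
    | _, Sum.inl _ => True
    | Sum.inr (Sum.inl p), Sum.inr (Sum.inl q) => p.1 = q.1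
    | Sum.inr (Sum.inr _), Sum.inr (Sum.inr _) => True
    | _, _ => False

/-!
Deleting one vertex leaves at least one of the two apex vertices `u`, `v`, which is adjacent to
everything else, so the graph stays connected. A cycle through the edge `uv` is that edge plus a
path from `v` to `u`; the inner vertices of this path avoid `u` and `v`, and in `X_{n,k} - {u, v}`
every component is a clique of size `k - 3` or `t ≤ k - 4`. So the path has at most `k - 3` inner
vertices and the cycle at most `k - 1` edges.
-/

open Finset

namespace SimpleGraph

variable {V : Type*} {G : SimpleGraph V}

lemma IsUniversal.induce {s : Set V} {v : V} (h : G.IsUniversal v) (hv : v ∈ s) :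
    (G.induce s).IsUniversal ⟨v, hv⟩ :=
  fun _ hw => h (Subtype.coe_injective.ne hw)

namespace Walk

lemma apply_eq_of_forall_mem_support {α : Type*} {f : V → α} {P : V → Prop}
    (hf : ∀ ⦃a b⦄, G.Adj a b → P a → P b → f a = f b) :
    ∀ {x y : V} (p : G.Walk x y), (∀ z ∈ p.support, P z) → f x = f y
  | _, _, .nil, _ => rfl
  | _, _, .cons h p, hp => by
    rw [support_cons, List.forall_mem_cons] at hp
    exact (hf h hp.1 (hp.2 _ p.start_mem_support)).trans
      (p.apply_eq_of_forall_mem_support hf hp.2)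

lemma IsCycle.exists_isPath_of_mem_edges {w u v : V} {c : G.Walk w w} (hc : c.IsCycle)
    (he : s(u, v) ∈ c.edges) : ∃ q : G.Walk v u, q.IsPath ∧ c.length = q.length + 1 := by
  classical
  have hu : u ∈ c.support := c.fst_mem_support_of_mem_edges he
  have hc' : (c.rotate u hu).IsCycle := hc.rotate hu
  have hv : v ∈ (c.rotate u hu).toSubgraph.neighborSet u :=
    adj_toSubgraph_iff_mem_edges.mpr ((c.rotate_edges u hu).mem_iff.mpr he)
  rw [hc'.neighborSet_toSubgraph_endpoint] at hv
  rcases hv with rfl | hv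
  · exact ⟨_, hc'.isPath_tail, by rw [length_tail_add_one hc'.not_nil, length_rotate]⟩
  · rw [← snd_reverse] at hv
    subst hv
    exact ⟨_, hc'.reverse.isPath_tail, by
      rw [length_tail_add_one hc'.reverse.not_nil, length_reverse, length_rotate]⟩

end Walk

end SimpleGraph

open SimpleGraph

namespace Xgraph

variable {r m t : ℕ}

abbrev Vertex (r m t : ℕ) := Fin 2 ⊕ (Fin r × Fin m) ⊕ Fin t

lemma isUniversal_inl (i : Fin 2) : (Xgraph r m t).IsUniversal (.inl i) := fun b h => by
  rw [Xgraph, fromRel_adj]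
  exact ⟨h, .inl (by rcases b with _ | _ | _ <;> trivial)⟩

/-- The component of `Xgraph r m t - A` containing a vertex outside `A`. -/
def cliqueIndex : Vertex r m t → Option (Fin r ⊕ Unit)
  | .inl _ => none
  | .inr (.inl p) => some (.inl p.1)
  | .inr (.inr _) => some (.inr ())

lemma cliqueIndex_eq_of_adj {a b : Vertex r m t}
    (h : (Xgraph r m t).Adj a b) (ha : a.isRight) (hb : b.isRight) :
    cliqueIndex a = cliqueIndex b := by
  rw [Xgraph, fromRel_adj] at h
  rcases a with _ | _ | _ <;> rcases b with _ | _ | _ <;> simp_all [cliqueIndex]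
  exact h.2.elim id Eq.symm

lemma card_cliqueIndex_eq_some_le (htm : t ≤ m) (c : Fin r ⊕ Unit) :
    #{z : Vertex r m t | cliqueIndex z = some c} ≤ m := by
  rcases c with i | _
  · calc _ ≤ #(univ.image fun j : Fin m => (.inr (.inl (i, j)) : Vertex r m t)) := by
          refine card_le_card fun z hz => ?_
          rw [mem_filter] at hz
          rcases z with _ | ⟨i', j⟩ | _ <;> simp_all [cliqueIndex]
      _ ≤ m := card_image_le.trans (by simp)
  · calc _ ≤ #(univ.image fun j : Fin t => (.inr (.inr j) : Vertex r m t)) := by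
          refine card_le_card fun z hz => ?_
          rw [mem_filter] at hz
          rcases z with _ | _ | j <;> simp_all [cliqueIndex]
      _ ≤ m := card_image_le.trans (by simpa using htm)

lemma length_le_of_isPath_of_isRight (htm : t ≤ m) {x y : Vertex r m t}
    {q : (Xgraph r m t).Walk x y} (hq : q.IsPath)
    (h : ∀ z ∈ q.support, z ≠ y → z.isRight) : q.length ≤ m := by
  by_cases hxy : x = y
  · subst hxy
    simp [(Walk.isPath_iff_nil.mp hq).length_eq_zero]
  obtain ⟨c, hc⟩ : ∃ c, cliqueIndex x = some c := by
    rcases x with x | _ | _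
    · simpa using h _ q.start_mem_support hxy
    all_goals exact ⟨_, rfl⟩
  have hsame : ∀ z ∈ q.support, z ≠ y → cliqueIndex z = some c := by
    intro z hz hzy
    have hy : y ∉ (q.takeUntil z hz).support := q.endpoint_notMem_support_takeUntil hq hz hzy.symm
    rw [← hc]
    exact ((q.takeUntil z hz).apply_eq_of_forall_mem_support (fun _ _ => cliqueIndex_eq_of_adj)
      fun w hw => h w (q.support_takeUntil_subset_support hz hw) (ne_of_mem_of_not_mem hw hy)).symm
  calc q.length = #(q.support.toFinset.erase y) := by
        rw [card_erase_of_mem (by simp), List.toFinset_card_of_nodup hq.support_nodup,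
          Walk.length_support, Nat.add_sub_cancel]
    _ ≤ #{z | cliqueIndex z = some c} := card_le_card fun z hz => by
        simp only [mem_erase, List.mem_toFinset] at hz
        simpa using hsame z hz.2 hz.1
    _ ≤ m := card_cliqueIndex_eq_some_le htm c

lemma length_le_of_isPath_inl_one_inl_zero (htm : t ≤ m)
    {q : (Xgraph r m t).Walk (.inl 1) (.inl 0)} (hq : q.IsPath) : q.length ≤ m + 1 := by
  cases q with
  | cons h q =>
    rw [Walk.cons_isPath_iff] at hq
    have := length_le_of_isPath_of_isRight htm hq.1 fun z hz hz0 => by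
      rcases z with z | _
      · fin_cases z
        · exact absurd rfl hz0
        · exact absurd hz hq.2
      · rfl
    rw [Walk.length_cons]
    omega

end Xgraph

theorem stmt_15 (r k t n : ℕ) (hk : 4 ≤ k) (ht : t ≤ k - 4)
    (hn : n = 2 + r * (k - 3) + t) (hn3 : 3 ≤ n) :
    TwoConnected (Xgraph r (k - 3) t) ∧
      ∀ (a : Fin 2 ⊕ (Fin r × Fin (k - 3)) ⊕ Fin t)
        (w : (Xgraph r (k - 3) t).Walk a a), w.IsCycle →
          s((Sum.inl 0 : Fin 2 ⊕ (Fin r × Fin (k - 3)) ⊕ Fin t), Sum.inl 1) ∈ w.edges →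
          w.length < k := by
  have htm : t ≤ k - 3 := by omega
  refine ⟨⟨?_, fun v => ?_⟩, fun a w hw he => ?_⟩
  · simp only [Nat.card_eq_fintype_card, Fintype.card_sum, Fintype.card_prod, Fintype.card_fin]
    omega
  · obtain ⟨i, hi⟩ : ∃ i : Fin 2, Sum.inl i ≠ v := by
      by_cases hv : v = .inl 0
      · exact ⟨1, by simp [hv]⟩
      · exact ⟨0, Ne.symm hv⟩
    exact Connected.of_isUniversal ((Xgraph.isUniversal_inl i).induce hi)
  · obtain ⟨q, hq, hlen⟩ := hw.exists_isPath_of_mem_edges he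
    have := Xgraph.length_le_of_isPath_inl_one_inl_zero htm hq
    omega
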